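/- For every n ∈ ℙ and every x ∈ G, n·|K_n(x)| ≤ 3 Σ_{l=0}^{|n|} 2^l K_{2^l}(x). -/

import Mathlib

open MeasureTheory
open scoped ENNReal

noncomputable section

/-- The dyadic group: countable product of `ZMod 2`. -/
abbrev G : Type := ℕ → ZMod 2

instance : TopologicalSpace (ZMod 2) := ⊥
instance : DiscreteTopology (ZMod 2) := ⟨rfl⟩
instance : IsTopologicalAddGroup (ZMod 2) :=
  { continuous_add := continuous_of_discreteTopology
    continuous_neg := continuous_of_discreteTopology }

instance : MeasurableSpace G := borel G
instance : BorelSpace G := ⟨rfl⟩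

/-- The normalized Haar measure on the dyadic group. -/
def haarG : Measure G :=
  Measure.addHaarMeasure ⟨⟨Set.univ, isCompact_univ⟩, by simp⟩

/-- Rademacher functions. -/
def rade (k : ℕ) (x : G) : ℝ := (-1 : ℝ) ^ (x k).val

/-- Walsh–Paley functions. -/
def walsh (n : ℕ) (x : G) : ℝ :=
  ∏ k ∈ Finset.range (n + 1), if n.testBit k then rade k x else 1

/-- Dirichlet kernels. -/
def Dker (n : ℕ) (x : G) : ℝ := ∑ k ∈ Finset.range n, walsh k x

/-- Fejér kernels. -/
def Fker (n : ℕ) (x : G) : ℝ := (1 / n : ℝ) * ∑ k ∈ Finset.Icc 1 n, Dker k x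

/-- Walsh–Fourier coefficients. -/
def fourierCoef (f : G → ℝ) (j : ℕ) : ℝ := ∫ x, f x * walsh j x ∂haarG

/-- Partial sums of the Walsh–Fourier series. -/
def partialSum (f : G → ℝ) (k : ℕ) (x : G) : ℝ :=
  ∑ j ∈ Finset.range k, fourierCoef f j * walsh j x

/-- Fejér means. -/
def fejerMean (n : ℕ) (f : G → ℝ) (x : G) : ℝ :=
  (1 / n : ℝ) * ∑ k ∈ Finset.Icc 1 n, partialSum f k x

/-- Matrix transform means. -/
def sigmaT (t : ℕ → ℕ → ℝ) (n : ℕ) (f : G → ℝ) (x : G) : ℝ :=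
  ∑ k ∈ Finset.Icc 1 n, t k n * partialSum f k x

/-- Matrix transform kernels. -/
def KT (t : ℕ → ℕ → ℝ) (n : ℕ) (x : G) : ℝ :=
  ∑ k ∈ Finset.Icc 1 n, t k n * Dker k x

/-- `Δ t_{k,n} = t_{k,n} - t_{k+1,n}` with convention `t_{n+1,n} = 0`. -/
def deltaT (t : ℕ → ℕ → ℝ) (k n : ℕ) : ℝ :=
  t k n - (if k + 1 ≤ n then t (k + 1) n else 0)

/-- `|x| = ∑ x_i 2^{-(i+1)}` for `x ∈ G`. -/
def normG (x : G) : ℝ := ∑' i, ((x i).val : ℝ) / 2 ^ (i + 1)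

/-- The `L_p` modulus of continuity. -/
def omegaP (p : ℝ≥0∞) (f : G → ℝ) (δ : ℝ) : ℝ≥0∞ :=
  ⨆ (t : G) (_ : normG t < δ), eLpNorm (fun x => f (x + t) - f x) p haarG

/-- Dyadic intervals `I_n` (around `0`). -/
def Iset (n : ℕ) : Set G := {y | ∀ i < n, y i = 0}

/-- `e_t ∈ G`: the `t`-th coordinate is `1`, the rest are `0`. -/
def eG (t : ℕ) : G := fun i => if i = t then 1 else 0

/-- The order `|n|` of a positive integer: `2^{|n|} ≤ n < 2^{|n|+1}`. -/
def ord (n : ℕ) : ℕ := Nat.log 2 n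

/-! The sums `S_n = n K_n = ∑_{k=1}^n D_k` obey `S_{2^m + j} = S_{2^m} + j D_{2^m} + r_m S_j`
for `j ≤ 2^m`, because `w_{2^m + j} = r_m w_j`. Since `D_{2^{m+1}} = (1 + r_m) D_{2^m}` with
`0 ≤ 1 + r_m ≤ 2`, induction on `m` gives `D_{2^m} ≥ 0` and `2^m D_{2^m} ≤ 2 S_{2^m}`. Hence
removing the leading binary digit of `n` costs at most `S_{2^m} + 2^m D_{2^m} ≤ 3 S_{2^m}`. -/

open Finset

/-- `S_n = n K_n`, written over `range` so that it splits with `sum_range_add`. -/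
def DkerSum (n : ℕ) (x : G) : ℝ := ∑ j ∈ range n, Dker (j + 1) x

variable {m j : ℕ} (x : G)

lemma abs_rade (k : ℕ) : |rade k x| = 1 :=
  abs_neg_one_pow _

lemma walsh_eq_prod_range {n N : ℕ} (hn : n < 2 ^ N) :
    walsh n x = ∏ k ∈ range N, if n.testBit k then rade k x else 1 := by
  have trunc : ∀ {N M : ℕ}, n < 2 ^ N → N ≤ M →
      ∏ k ∈ range N, (if n.testBit k then rade k x else 1) =
        ∏ k ∈ range M, if n.testBit k then rade k x else 1 := by
    intro N M hN hNM
    refine prod_subset (range_subset_range.2 hNM) fun k _ hk => ?_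
    have hNk : N ≤ k := by simpa using hk
    rw [Nat.testBit_lt_two_pow (hN.trans_le (Nat.pow_le_pow_right two_pos hNk)),
      if_neg Bool.false_ne_true]
  have hmin : n < 2 ^ min N (n + 1) := by
    rcases min_choice N (n + 1) with h | h <;> rw [h]
    exacts [hn, Nat.lt_two_pow_self.trans (Nat.pow_lt_pow_right one_lt_two n.lt_succ_self)]
  rw [walsh, ← trunc hmin (min_le_right _ _), trunc hmin (min_le_left _ _)]

lemma walsh_two_pow_add (hj : j < 2 ^ m) : walsh (2 ^ m + j) x = rade m x * walsh j x := by
  have hlt : 2 ^ m + j < 2 ^ (m + 1) := by rw [pow_succ]; omega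
  have hj' : j < 2 ^ (m + 1) := hj.trans (Nat.pow_lt_pow_right one_lt_two m.lt_succ_self)
  rw [walsh_eq_prod_range x hlt, walsh_eq_prod_range x hj', prod_range_succ, prod_range_succ,
    Nat.testBit_two_pow_add_eq, Nat.testBit_lt_two_pow hj,
    prod_congr rfl fun k hk => by rw [Nat.testBit_two_pow_add_gt (mem_range.1 hk)]]
  simp [mul_comm]

lemma Dker_two_pow_add (hj : j ≤ 2 ^ m) :
    Dker (2 ^ m + j) x = Dker (2 ^ m) x + rade m x * Dker j x := by
  rw [Dker, sum_range_add, Dker, Dker, mul_sum]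
  exact congrArg _ (sum_congr rfl fun i hi => walsh_two_pow_add x ((mem_range.1 hi).trans_le hj))

lemma DkerSum_two_pow_add (hj : j ≤ 2 ^ m) :
    DkerSum (2 ^ m + j) x = DkerSum (2 ^ m) x + j * Dker (2 ^ m) x + rade m x * DkerSum j x := by
  have hshift : ∀ i ∈ range j,
      Dker (2 ^ m + i + 1) x = Dker (2 ^ m) x + rade m x * Dker (i + 1) x :=
    fun i hi => Dker_two_pow_add x (j := i + 1) (by have := mem_range.1 hi; omega)
  rw [DkerSum, DkerSum, DkerSum, sum_range_add, mul_sum, sum_congr rfl hshift, sum_add_distrib,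
    sum_const, card_range, nsmul_eq_mul]
  ring

lemma Dker_two_pow_succ (m : ℕ) : Dker (2 ^ (m + 1)) x = (1 + rade m x) * Dker (2 ^ m) x := by
  rw [pow_succ, mul_two, Dker_two_pow_add x le_rfl]
  ring

lemma DkerSum_two_pow_succ (m : ℕ) :
    DkerSum (2 ^ (m + 1)) x = (1 + rade m x) * DkerSum (2 ^ m) x + 2 ^ m * Dker (2 ^ m) x := by
  rw [pow_succ, mul_two, DkerSum_two_pow_add x le_rfl]
  push_cast
  ring

lemma Dker_two_pow_nonneg (m : ℕ) : 0 ≤ Dker (2 ^ m) x := by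
  induction m with
  | zero => simp [Dker, walsh]
  | succ m ih =>
    rw [Dker_two_pow_succ]
    obtain ⟨hr, -⟩ := abs_le.1 (abs_rade x m).le
    exact mul_nonneg (by linarith) ih

lemma two_pow_mul_Dker_le (m : ℕ) : 2 ^ m * Dker (2 ^ m) x ≤ 2 * DkerSum (2 ^ m) x := by
  induction m with
  | zero => simp [DkerSum, Dker, walsh]
  | succ m ih =>
    obtain ⟨hr₁, hr₂⟩ := abs_le.1 (abs_rade x m).le
    have hD := Dker_two_pow_nonneg x m
    have h2m : (0 : ℝ) ≤ 2 ^ m := by positivity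
    rw [Dker_two_pow_succ, DkerSum_two_pow_succ, pow_succ]
    nlinarith [mul_le_mul_of_nonneg_left ih (by linarith : (0 : ℝ) ≤ 1 + rade m x),
      mul_nonneg (mul_nonneg h2m hD) (by linarith : (0 : ℝ) ≤ 1 - rade m x)]

lemma DkerSum_two_pow_nonneg (m : ℕ) : 0 ≤ DkerSum (2 ^ m) x := by
  nlinarith [two_pow_mul_Dker_le x m,
    mul_nonneg (pow_nonneg zero_le_two m) (Dker_two_pow_nonneg x m)]

lemma abs_DkerSum_le_of_lt_two_pow {n : ℕ} (hn : n < 2 ^ m) :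
    |DkerSum n x| ≤ 3 * ∑ l ∈ range m, DkerSum (2 ^ l) x := by
  induction m generalizing n with
  | zero => simp_all [DkerSum]
  | succ m ih =>
    rw [sum_range_succ]
    have hS := DkerSum_two_pow_nonneg x m
    by_cases hlow : n < 2 ^ m
    · linarith [ih hlow]
    obtain ⟨k, rfl⟩ := Nat.exists_eq_add_of_le (not_lt.1 hlow)
    have hk : k < 2 ^ m := by rw [pow_succ] at hn; omega
    have hkD : (k : ℝ) * Dker (2 ^ m) x ≤ 2 * DkerSum (2 ^ m) x := by
      refine le_trans (mul_le_mul_of_nonneg_right ?_ (Dker_two_pow_nonneg x m))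
        (two_pow_mul_Dker_le x m)
      exact_mod_cast hk.le
    have hkD0 : 0 ≤ (k : ℝ) * Dker (2 ^ m) x :=
      mul_nonneg k.cast_nonneg (Dker_two_pow_nonneg x m)
    calc |DkerSum (2 ^ m + k) x|
        ≤ |DkerSum (2 ^ m) x + k * Dker (2 ^ m) x| + |rade m x * DkerSum k x| := by
          rw [DkerSum_two_pow_add x hk.le]; exact abs_add_le _ _
      _ = DkerSum (2 ^ m) x + k * Dker (2 ^ m) x + |DkerSum k x| := by
          rw [abs_mul, abs_rade, one_mul, abs_of_nonneg (by linarith)]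
      _ ≤ _ := by linarith [ih hk]

lemma natCast_mul_Fker (n : ℕ) : n * Fker n x = DkerSum n x := by
  rcases Nat.eq_zero_or_pos n with rfl | hn
  · simp [DkerSum]
  rw [Fker, DkerSum, range_eq_Ico, sum_Ico_add' (fun k => Dker k x), zero_add,
    Ico_add_one_right_eq_Icc, ← mul_assoc, mul_one_div_cancel (by positivity), one_mul]

theorem statement7_general (n : ℕ) (x : G) :
    (n : ℝ) * |Fker n x| ≤
      3 * ∑ l ∈ Finset.range (ord n + 1), (2 : ℝ) ^ l * Fker (2 ^ l) x := by
  have hpow : ∀ l : ℕ, (2 : ℝ) ^ l * Fker (2 ^ l) x = DkerSum (2 ^ l) x := fun l => by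
    exact_mod_cast natCast_mul_Fker x (2 ^ l)
  rw [← Nat.abs_cast, ← abs_mul, natCast_mul_Fker, sum_congr rfl fun l _ => hpow l]
  exact abs_DkerSum_le_of_lt_two_pow x (Nat.lt_pow_succ_log_self one_lt_two n)

theorem statement7 (n : ℕ) (hn : 1 ≤ n) (x : G) :
    (n : ℝ) * |Fker n x| ≤
      3 * ∑ l ∈ Finset.range (ord n + 1), (2 : ℝ) ^ l * Fker (2 ^ l) x :=
  statement7_general n x
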